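/- Strong uniform convergence without norm convergence and without spectrum convergence (the paper's Example): let H be a complex Hilbert space, (P_n) a sequence of orthogonal projections on H with P_n x → x for every x ∈ H and P_n ≠ 1 for every n, and let 𝕋 be the circle group with Haar probability measure μ. Define U_n(z) := P_n + z·(1 − P_n) for z ∈ 𝕋, where z acts by scalar multiplication. Then: (i) each U_n is a norm-continuous unitary representation of 𝕋 on H; (ii) for every x ∈ H, sup_{z ∈ 𝕋} ‖U_n(z)x − x‖ → 0 as n → ∞; (iii) sup_{z ∈ 𝕋} ‖U_n(z) − 1‖ = 2 for every n, so U_n does not converge to the trivial representation in the supremum operator norm; and (iv) with χ₁ the identity character of 𝕋, the spectral projection ∫_𝕋 χ₁(z)⁻¹ U_n(z) dμ(z) equals 1 − P_n ≠ 0 for every n, whereas the corresponding integral for the constant representation z ↦ 1 vanishes. -/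

import Mathlib

/-!
Everything follows from `U_n(z) - 1 = (z - 1)(1 - P_n)`. Applied to a vector, the supremum over
`z` is `2‖x - P_n x‖ → 0`; in operator norm it is `2‖1 - P_n‖ = 2`, a nonzero orthogonal
projection having norm one. The Fourier coefficient of `z ↦ P_n + z(1 - P_n)` at the identity
character is `1 - P_n` because `∫ z⁻¹ dμ = 0`, the integrand changing sign under translation
by `-1`.
-/

open MeasureTheory

namespace IsIdempotentElem

variable {R A : Type*} [CommRing R] [Ring A] [Algebra R A] {p : A}

variable (R) in
def complScaling (hp : IsIdempotentElem p) : R →* A where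
  toFun t := p + t • (1 - p)
  map_one' := by rw [one_smul, add_sub_cancel]
  map_mul' s t := by
    simp only [mul_add, add_mul, smul_mul_assoc, mul_smul_comm, hp.eq, hp.mul_one_sub_self,
      hp.one_sub_mul_self, hp.one_sub.eq, smul_zero, smul_smul, zero_add, add_zero, mul_comm t s]

lemma complScaling_apply (hp : IsIdempotentElem p) (t : R) :
    hp.complScaling R t = p + t • (1 - p) := rfl

lemma complScaling_sub_one (hp : IsIdempotentElem p) (t : R) :
    hp.complScaling R t - 1 = (t - 1) • (1 - p) := by
  rw [complScaling_apply, sub_smul, one_smul]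
  abel

end IsIdempotentElem

lemma IsStarProjection.complScaling_mem_unitary {A : Type*} [Ring A] [StarRing A] [Algebra ℂ A]
    [StarModule ℂ A] {p : A} (hp : IsStarProjection p) (z : Circle) :
    hp.isIdempotentElem.complScaling ℂ (z : ℂ) ∈ unitary A := by
  have hstar : star (hp.isIdempotentElem.complScaling ℂ (z : ℂ))
      = hp.isIdempotentElem.complScaling ℂ ((z⁻¹ : Circle) : ℂ) := by
    rw [IsIdempotentElem.complScaling_apply, IsIdempotentElem.complScaling_apply, star_add,
      star_smul, hp.isSelfAdjoint.star_eq, hp.one_sub.isSelfAdjoint.star_eq,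
      Circle.coe_inv_eq_conj]
    rfl
  rw [Unitary.mem_iff, hstar, ← map_mul, ← map_mul, ← Circle.coe_mul, ← Circle.coe_mul,
    inv_mul_cancel, mul_inv_cancel, Circle.coe_one, map_one]
  exact ⟨rfl, rfl⟩

lemma IsStarProjection.norm_eq_one {E : Type*} [NonUnitalNormedRing E] [StarRing E] [CStarRing E]
    {p : E} (hp : IsStarProjection p) (hp₀ : p ≠ 0) : ‖p‖ = 1 := by
  have hsq : ‖p‖ * ‖p‖ = ‖p‖ := by
    rw [← CStarRing.norm_star_mul_self, hp.isSelfAdjoint.star_eq, hp.isIdempotentElem.eq]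
  exact (mul_eq_right₀ (norm_ne_zero_iff.mpr hp₀)).mp hsq

namespace Circle

lemma norm_coe_sub_one_le (z : Circle) : ‖(z : ℂ) - 1‖ ≤ 2 := by
  calc ‖(z : ℂ) - 1‖ ≤ ‖(z : ℂ)‖ + ‖(1 : ℂ)‖ := norm_sub_le _ _
    _ = 2 := by rw [norm_coe, norm_one]; norm_num

lemma iSup_norm_coe_sub_one_mul {c : ℝ} (hc : 0 ≤ c) :
    ⨆ z : Circle, ‖(z : ℂ) - 1‖ * c = 2 * c := by
  have hbdd : BddAbove (Set.range fun z : Circle => ‖(z : ℂ) - 1‖) :=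
    ⟨2, Set.forall_mem_range.mpr norm_coe_sub_one_le⟩
  have hsup : ⨆ z : Circle, ‖(z : ℂ) - 1‖ = 2 := by
    refine le_antisymm (ciSup_le norm_coe_sub_one_le) ?_
    calc (2 : ℝ) = ‖((-1 : Circle) : ℂ) - 1‖ := by rw [coe_neg, coe_one]; norm_num
      _ ≤ ⨆ z : Circle, ‖(z : ℂ) - 1‖ := le_ciSup hbdd _
  rw [← Real.iSup_mul_of_nonneg hc, hsup]

variable [MeasurableSpace Circle] [BorelSpace Circle] (μ : Measure Circle)

lemma integral_coe_inv [μ.IsMulLeftInvariant] : ∫ z : Circle, ((z⁻¹ : Circle) : ℂ) ∂μ = 0 :=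
  integral_eq_zero_of_mul_left_eq_neg (g := -1) fun z => by
    rw [neg_one_mul, inv_neg, coe_neg]

lemma integral_inv_smul_add_smul {E : Type*} [NormedAddCommGroup E] [NormedSpace ℂ E]
    [CompleteSpace E] [μ.IsMulLeftInvariant] [IsProbabilityMeasure μ] (a b : E) :
    ∫ z : Circle, ((z⁻¹ : Circle) : ℂ) • (a + (z : ℂ) • b) ∂μ = b := by
  have hint : Integrable (fun z : Circle => ((z⁻¹ : Circle) : ℂ)) μ :=
    (by fun_prop : Continuous _).integrable_of_hasCompactSupport
      (HasCompactSupport.of_compactSpace _)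
  simp_rw [smul_add, smul_smul, ← coe_mul, inv_mul_cancel, coe_one, one_smul]
  rw [integral_add (hint.smul_const a) (integrable_const b), integral_smul_const,
    integral_coe_inv, zero_smul, zero_add, integral_const, probReal_univ, one_smul]

end Circle

theorem example_strict_convergence_without_spectrum_convergence
    {H : Type*} [NormedAddCommGroup H] [InnerProductSpace ℂ H] [CompleteSpace H]
    [MeasurableSpace Circle] [BorelSpace Circle]
    (μ : Measure Circle) [μ.IsHaarMeasure] [IsProbabilityMeasure μ]
    (P : ℕ → H →L[ℂ] H)
    (hsa : ∀ n, IsSelfAdjoint (P n))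
    (hidem : ∀ n, IsIdempotentElem (P n))
    (hne : ∀ n, P n ≠ 1)
    (hconv : ∀ x : H, Filter.Tendsto (fun n => P n x) Filter.atTop (nhds x))
    (U : ℕ → Circle → H →L[ℂ] H)
    (hUdef : ∀ n z, U n z = P n + (z : ℂ) • ((1 : H →L[ℂ] H) - P n)) :
    (∀ n, (∀ z, U n z ∈ unitary (H →L[ℂ] H)) ∧ U n 1 = 1 ∧
        (∀ z w, U n (z * w) = U n z * U n w) ∧ Continuous (U n)) ∧
    (∀ x : H, Filter.Tendsto (fun n => ⨆ z : Circle, ‖U n z x - x‖)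
        Filter.atTop (nhds 0)) ∧
    (∀ n, (⨆ z : Circle, ‖U n z - 1‖) = 2) ∧
    (∀ n, (∫ z : Circle, ((z⁻¹ : Circle) : ℂ) • U n z ∂μ) = 1 - P n ∧
        (1 : H →L[ℂ] H) - P n ≠ 0) ∧
    (∫ z : Circle, ((z⁻¹ : Circle) : ℂ) • (1 : H →L[ℂ] H) ∂μ) = 0 := by
  have hP n : IsStarProjection (P n) := ⟨hidem n, hsa n⟩
  have hU n z : U n z = (hP n).isIdempotentElem.complScaling ℂ (z : ℂ) := hUdef n z
  have hQ₀ n : 1 - P n ≠ 0 := sub_ne_zero.mpr (hne n).symm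
  have hU_sub_one n z : U n z - 1 = ((z : ℂ) - 1) • (1 - P n) := by
    rw [hU, IsIdempotentElem.complScaling_sub_one]
  refine ⟨fun n => ⟨?_, ?_, ?_, ?_⟩, fun x => ?_, fun n => ?_, fun n => ⟨?_, hQ₀ n⟩, ?_⟩
  · exact fun z => hU n z ▸ (hP n).complScaling_mem_unitary z
  · rw [hU, Circle.coe_one, map_one]
  · intro z w
    rw [hU, hU, hU, Circle.coe_mul, map_mul]
  · rw [funext (hUdef n)]
    fun_prop
  · have hsup n : ⨆ z : Circle, ‖U n z x - x‖ = 2 * ‖x - P n x‖ := by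
      have h z : U n z x - x = (U n z - 1) x := rfl
      simp_rw [h, hU_sub_one, smul_apply, norm_smul]
      exact Circle.iSup_norm_coe_sub_one_mul (norm_nonneg _)
    simp_rw [hsup]
    simpa [norm_sub_rev] using ((tendsto_iff_norm_sub_tendsto_zero.mp (hconv x)).const_mul 2)
  · simp_rw [hU_sub_one, norm_smul, (hP n).one_sub.norm_eq_one (hQ₀ n)]
    simpa using Circle.iSup_norm_coe_sub_one_mul zero_le_one
  · simp_rw [hUdef n, Circle.integral_inv_smul_add_smul]
  · rw [integral_smul_const, Circle.integral_coe_inv, zero_smul]
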